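/- Let G be a finitely generated LPF group with positive rank gradient, let n be a natural number, and let H₁, …, Hₙ be finitely generated subgroups of infinite index in G. Then the profinite measure of the product set satisfies μ(H₁H₂⋯Hₙ) = 0. -/

import Mathlib

open scoped Pointwise

universe u

/-- `d(H)`: the smallest cardinality of a generating set of the subgroup `H`. -/
noncomputable def subgroupRank {G : Type u} [Group G] (H : Subgroup G) : ℕ :=
  sInf {n : ℕ | ∃ S : Finset G, S.card = n ∧ Subgroup.closure (S : Set G) = H}

/-- The rank gradient `∇G = inf (d(U) - 1)/[G : U]` over finite index subgroups `U`. -/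
noncomputable def rankGradient (G : Type u) [Group G] : ℝ :=
  sInf {r : ℝ | ∃ U : Subgroup G, U.FiniteIndex ∧
    r = ((subgroupRank U : ℝ) - 1) / (U.index : ℝ)}

/-- `G` is LERF if every finitely generated subgroup is an intersection of
finite index subgroups. -/
def IsLERF (G : Type u) [Group G] : Prop :=
  ∀ H : Subgroup G, H.FG →
    ∃ 𝒮 : Set (Subgroup G), (∀ U ∈ 𝒮, U.FiniteIndex) ∧ H = sInf 𝒮

/-- `G` is LPF if every finitely generated subgroup of infinite index is contained in
finite index subgroups of arbitrarily large index. -/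
def IsLPF (G : Type u) [Group G] : Prop :=
  ∀ H : Subgroup G, H.FG → H.index = 0 →
    ∀ n : ℕ, ∃ U : Subgroup G, H ≤ U ∧ U.FiniteIndex ∧ n ≤ U.index

/-- An epimorphism from `G` onto a finite group. -/
structure FiniteQuotient (G : Type u) [Group G] where
  K : Type u
  [grp : Group K]
  [fin : Fintype K]
  φ : G →* K
  surj : Function.Surjective φ

attribute [instance] FiniteQuotient.grp FiniteQuotient.fin

/-- The profinite measure `μ(S) = inf |φ(S)|/|φ(G)|` over epimorphisms `φ` from `G`
onto finite groups. -/
noncomputable def profiniteMeasure {G : Type u} [Group G] (S : Set G) : ℝ :=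
  sInf {r : ℝ | ∃ q : FiniteQuotient G,
    r = (Set.ncard (q.φ '' S) : ℝ) / (Fintype.card q.K : ℝ)}

/-- The product set `H₁H₂⋯Hₙ`. -/
def productSet {G : Type u} [Group G] {n : ℕ} (H : Fin n → Subgroup G) : Set G :=
  {g : G | ∃ f : Fin n → G, (∀ i, f i ∈ H i) ∧ g = (List.ofFn f).prod}

/-!
Choose `N` with `∑ d(Hᵢ) < ∇G · N`, use LPF to put each `Hᵢ` in a subgroup of index at least `N`,
and let `W` be a finite-index normal subgroup inside all of these. For coset representatives `yᵢ`
of `W ∩ Hᵢ` in `Hᵢ`, the product set is covered by the finitely many right cosets `T · y₁⋯yₙ`,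
where `T ≤ W` is generated by the conjugates `(y₁⋯yᵢ)(W ∩ Hᵢ)(y₁⋯yᵢ)⁻¹`. By Schreier,
`d(T) ≤ ∑ [Hᵢ : W ∩ Hᵢ] d(Hᵢ) ≤ [G : W] ∑ d(Hᵢ) / N < ∇G · [G : W]`, which the rank gradient
forbids for a finite-index subgroup of `W`; so `T` has infinite index. By LPF again each `T` lies
in subgroups of index at least `m`, and in a common finite quotient the product set then takes up
at most a fraction `(number of cosets) / m`, for every `m`.
-/

section

variable {G : Type u} [Group G]

lemma subgroupRank_le_card {K : Subgroup G} {S : Finset G} (hS : Subgroup.closure (S : Set G) = K) :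
    subgroupRank K ≤ S.card :=
  Nat.sInf_le ⟨S, rfl, hS⟩

lemma rankGradient_mul_index_le (U : Subgroup G) [U.FiniteIndex] :
    rankGradient G * U.index ≤ subgroupRank U - 1 := by
  have hU : (0 : ℝ) < U.index := mod_cast Nat.pos_of_ne_zero Subgroup.FiniteIndex.index_ne_zero
  have hbdd : BddBelow {r : ℝ | ∃ U : Subgroup G, U.FiniteIndex ∧
      r = ((subgroupRank U : ℝ) - 1) / (U.index : ℝ)} := by
    refine ⟨-1, ?_⟩
    rintro r ⟨V, hV, rfl⟩
    have hV1 : (1 : ℝ) ≤ V.index := mod_cast Nat.one_le_iff_ne_zero.mpr hV.index_ne_zero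
    rw [le_div_iff₀ (by linarith)]
    linarith [(subgroupRank V).cast_nonneg (α := ℝ)]
  rw [← le_div_iff₀ hU]
  exact csInf_le hbdd ⟨U, inferInstance, rfl⟩

lemma index_eq_zero_of_subgroupRank_lt (hrg : 0 ≤ rankGradient G) {T W : Subgroup G}
    [W.FiniteIndex] (hTW : T ≤ W) (hT : subgroupRank T < rankGradient G * W.index) :
    T.index = 0 := by
  by_contra hT0
  have : T.FiniteIndex := ⟨hT0⟩
  have hWT : (W.index : ℝ) ≤ T.index := mod_cast Subgroup.index_antitone hTW
  nlinarith [rankGradient_mul_index_le T]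

lemma relIndex_mul_index_le {W U H : Subgroup G} [W.FiniteIndex] (hWU : W ≤ U) (hHU : H ≤ U) :
    W.relIndex H * U.index ≤ W.index := by
  have := Subgroup.isFiniteRelIndex_of_finiteIndex (H := W) (K := U)
  calc W.relIndex H * U.index ≤ W.relIndex U * U.index :=
        Nat.mul_le_mul_right _ (Subgroup.relIndex_le_of_le_right hHU Subgroup.relIndex_ne_zero)
    _ = W.index := Subgroup.relIndex_mul_index hWU

lemma exists_finset_card_le_closure_eq_inf (W H : Subgroup G) [W.FiniteIndex] [Group.FG H] :
    ∃ F : Finset G, F.card ≤ W.relIndex H * Group.rank H ∧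
      Subgroup.closure (F : Set G) = W ⊓ H := by
  classical
  have := Subgroup.isFiniteRelIndex_of_finiteIndex (H := W) (K := H)
  obtain ⟨S, hScard, hS⟩ := Group.rank_spec H
  obtain ⟨T, hTcard, hT⟩ := Subgroup.exists_finset_card_le_mul (W.subgroupOf H) hS
  refine ⟨T.image fun x => x.1.1, Finset.card_image_le.trans (hScard ▸ hTcard), ?_⟩
  rw [Finset.coe_image, ← Set.image_image Subtype.val Subtype.val,
    ← H.coe_subtype, ← MonoidHom.map_closure, ← (W.subgroupOf H).coe_subtype,
    ← MonoidHom.map_closure, hT, ← MonoidHom.range_eq_map, Subgroup.range_subtype,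
    Subgroup.subgroupOf_map_subtype]

-- The subgroup generated by the conjugates `(y₀⋯yᵢ) Aᵢ (y₀⋯yᵢ)⁻¹`
-- (`Fin.partialProd y i.succ = y₀⋯yᵢ`).
def partialProdConjSup {n : ℕ} (A : Fin n → Subgroup G) (y : Fin n → G) : Subgroup G :=
  ⨆ i, (A i).map (MulAut.conj (Fin.partialProd y i.succ)).toMonoidHom

lemma partialProdConjSup_le {n : ℕ} {A : Fin n → Subgroup G} {W : Subgroup G} [W.Normal]
    (hA : ∀ i, A i ≤ W) (y : Fin n → G) : partialProdConjSup A y ≤ W :=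
  iSup_le fun i => by
    rintro _ ⟨a, ha, rfl⟩
    exact Subgroup.Normal.conj_mem inferInstance a (hA i ha) _

lemma map_conj_partialProdConjSup_tail_le {n : ℕ} (A : Fin (n + 1) → Subgroup G)
    (y : Fin (n + 1) → G) :
    (partialProdConjSup (fun i => A i.succ) (fun i => y i.succ)).map
      (MulAut.conj (y 0)).toMonoidHom ≤ partialProdConjSup A y := by
  rw [partialProdConjSup, Subgroup.map_iSup]
  refine iSup_le fun i => ?_
  have hconj : (MulAut.conj (y 0)).toMonoidHom.comp
      (MulAut.conj (Fin.partialProd (fun i => y i.succ) i.succ)).toMonoidHom =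
      (MulAut.conj (Fin.partialProd y i.succ.succ)).toMonoidHom := by
    rw [Fin.partialProd_succ', map_mul]
    rfl
  rw [Subgroup.map_map, hconj]
  exact le_iSup (fun j => (A j).map (MulAut.conj (Fin.partialProd y j.succ)).toMonoidHom) i.succ

-- With `aᵢ = yᵢ⁻¹ fᵢ`: `(y₀a₀)⋯(yₖaₖ) = ∏ᵢ (y₀⋯yᵢ) aᵢ (y₀⋯yᵢ)⁻¹ · (y₀⋯yₖ)`.
lemma prod_mul_inv_prod_mem_partialProdConjSup {n : ℕ} {A : Fin n → Subgroup G}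
    {f y : Fin n → G} (h : ∀ i, (y i)⁻¹ * f i ∈ A i) :
    (List.ofFn f).prod * (List.ofFn y).prod⁻¹ ∈ partialProdConjSup A y := by
  induction n with
  | zero => simp
  | succ n ih =>
    have hhead : y 0 * ((y 0)⁻¹ * f 0) * (y 0)⁻¹ ∈ partialProdConjSup A y := by
      refine Subgroup.mem_iSup_of_mem 0 ⟨_, h 0, ?_⟩
      simp [Fin.partialProd, List.ofFn_succ]
    have htail := map_conj_partialProdConjSup_tail_le A y <|
      Subgroup.mem_map_of_mem _ <| ih (A := fun i => A i.succ) (f := fun i => f i.succ)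
        (y := fun i => y i.succ) fun i => h i.succ
    convert mul_mem hhead htail using 1
    simp only [List.ofFn_succ, List.prod_cons, MulEquiv.toMonoidHom_eq_coe, MonoidHom.coe_coe,
      MulAut.conj_apply]
    group

lemma exists_finset_card_le_closure_eq_partialProdConjSup {n : ℕ} {A : Fin n → Subgroup G}
    (F : Fin n → Finset G) (hF : ∀ i, Subgroup.closure (F i : Set G) = A i) (y : Fin n → G) :
    ∃ S : Finset G, S.card ≤ ∑ i, (F i).card ∧
      Subgroup.closure (S : Set G) = partialProdConjSup A y := by
  classical
  refine ⟨Finset.univ.biUnion fun i => (F i).image (MulAut.conj (Fin.partialProd y i.succ)),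
    Finset.card_biUnion_le.trans (Finset.sum_le_sum fun i _ => Finset.card_image_le), ?_⟩
  rw [Finset.coe_biUnion, Finset.coe_univ, Set.biUnion_univ, Subgroup.closure_iUnion]
  refine iSup_congr fun i => ?_
  rw [Finset.coe_image, ← hF i, MonoidHom.map_closure]
  rfl

lemma profiniteMeasure_nonneg (S : Set G) : 0 ≤ profiniteMeasure S :=
  Real.sInf_nonneg fun _ ⟨_, hr⟩ => hr ▸ by positivity

lemma profiniteMeasure_le_ncard_image_div_index (N : Subgroup G) [N.Normal] [N.FiniteIndex]
    (S : Set G) :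
    profiniteMeasure S ≤ ((QuotientGroup.mk' N '' S).ncard : ℝ) / N.index := by
  have := N.fintypeQuotientOfFiniteIndex
  have hbdd : BddBelow {r : ℝ | ∃ q : FiniteQuotient G,
      r = (Set.ncard (q.φ '' S) : ℝ) / (Fintype.card q.K : ℝ)} :=
    ⟨0, fun _ ⟨_, hr⟩ => hr ▸ by positivity⟩
  refine csInf_le hbdd ⟨⟨G ⧸ N, QuotientGroup.mk' N, QuotientGroup.mk'_surjective N⟩, ?_⟩
  rw [N.index_eq_card, Nat.card_eq_fintype_card]

lemma ncard_image_mk_mul_singleton_mul_index {N V : Subgroup G} [N.Normal] [N.FiniteIndex]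
    (hNV : N ≤ V) (g : G) :
    (QuotientGroup.mk' N '' ((V : Set G) * {g})).ncard * V.index = N.index := by
  have hker : (QuotientGroup.mk' N).ker ≤ V := by rwa [QuotientGroup.ker_mk']
  rw [Set.image_mul, Set.image_singleton, Set.mul_singleton,
    Set.ncard_image_of_injective _ (mul_left_injective _), ← Subgroup.coe_map,
    ← Nat.card_coe_set_eq, SetLike.coe_sort_coe,
    ← Subgroup.index_map_eq _ (QuotientGroup.mk'_surjective N) hker, Subgroup.card_mul_index,
    Subgroup.index_eq_card]

lemma profiniteMeasure_le_sum_inv_index {ι : Type*} [Fintype ι] (V : ι → Subgroup G)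
    [∀ c, (V c).FiniteIndex] (g : ι → G) {S : Set G} (hS : S ⊆ ⋃ c, (V c : Set G) * {g c}) :
    profiniteMeasure S ≤ ∑ c, ((V c).index : ℝ)⁻¹ := by
  have := Subgroup.finiteIndex_iInf fun c => (inferInstance : (V c).FiniteIndex)
  set N := (⨅ c, V c).normalCore
  have hN : (0 : ℝ) < N.index := mod_cast Nat.pos_of_ne_zero Subgroup.FiniteIndex.index_ne_zero
  have hNV c : N ≤ V c := (Subgroup.normalCore_le _).trans (iInf_le _ c)
  have hcover : (QuotientGroup.mk' N '' S).ncard ≤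
      ∑ c, (QuotientGroup.mk' N '' ((V c : Set G) * {g c})).ncard :=
    (Set.ncard_le_ncard ((Set.image_mono hS).trans (Set.image_iUnion).le)
      (Set.toFinite _)).trans (Set.ncard_iUnion_le_of_fintype _)
  calc profiniteMeasure S ≤ ((QuotientGroup.mk' N '' S).ncard : ℝ) / N.index :=
        profiniteMeasure_le_ncard_image_div_index N S
    _ ≤ (∑ c, (QuotientGroup.mk' N '' ((V c : Set G) * {g c})).ncard : ℕ) / (N.index : ℝ) := by
        gcongr
    _ = ∑ c, ((V c).index : ℝ)⁻¹ := by
        push_cast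
        rw [Finset.sum_div]
        refine Finset.sum_congr rfl fun c _ => ?_
        have hV : ((V c).index : ℝ) ≠ 0 := mod_cast Subgroup.FiniteIndex.index_ne_zero
        rw [div_eq_iff hN.ne', ← ncard_image_mk_mul_singleton_mul_index (hNV c) (g c)]
        push_cast
        field_simp

lemma profiniteMeasure_eq_zero_of_subset_iUnion (hlpf : IsLPF G) {ι : Type*} [Finite ι]
    (T : ι → Subgroup G) (g : ι → G) (hfg : ∀ c, (T c).FG) (hinf : ∀ c, (T c).index = 0)
    {S : Set G} (hS : S ⊆ ⋃ c, (T c : Set G) * {g c}) : profiniteMeasure S = 0 := by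
  have := Fintype.ofFinite ι
  refine le_antisymm (ge_of_tendsto (tendsto_const_div_atTop_nhds_zero_nat (Fintype.card ι : ℝ))
    ?_) (profiniteMeasure_nonneg S)
  filter_upwards [Filter.eventually_gt_atTop 0] with m hm
  choose V hTV hVfi hmV using fun c => hlpf (T c) (hfg c) (hinf c) m
  calc profiniteMeasure S ≤ ∑ c, ((V c).index : ℝ)⁻¹ :=
        profiniteMeasure_le_sum_inv_index V g <| hS.trans <|
          Set.iUnion_mono fun c => Set.mul_subset_mul_right (hTV c)
    _ ≤ ∑ _c : ι, (m : ℝ)⁻¹ := Finset.sum_le_sum fun c _ => by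
        gcongr
        exact hmV c
    _ = Fintype.card ι / m := by simp [div_eq_mul_inv]

lemma exists_normal_forall_partialProdConjSup_fg_index_eq_zero (hlpf : IsLPF G)
    (hrg : 0 < rankGradient G) {n : ℕ} (H : Fin n → Subgroup G) (hHfg : ∀ i, (H i).FG)
    (hHi : ∀ i, (H i).index = 0) :
    ∃ W : Subgroup G, W.Normal ∧ W.FiniteIndex ∧ ∀ y : Fin n → G,
      (partialProdConjSup (fun i => W ⊓ H i) y).FG ∧
        (partialProdConjSup (fun i => W ⊓ H i) y).index = 0 := by
  have := fun i => (Group.fg_iff_subgroup_fg (H i)).mpr (hHfg i)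
  obtain ⟨N, hN⟩ := exists_nat_gt ((∑ i, (Group.rank (H i) : ℝ)) / rankGradient G)
  rw [div_lt_iff₀ hrg] at hN
  choose U hHU hUfi hNU using fun i => hlpf (H i) (hHfg i) (hHi i) N
  have := Subgroup.finiteIndex_iInf hUfi
  set W := (⨅ i, U i).normalCore
  have hWU i : W ≤ U i := (Subgroup.normalCore_le _).trans (iInf_le _ i)
  choose F hFcard hF using fun i => exists_finset_card_le_closure_eq_inf W (H i)
  refine ⟨W, inferInstance, inferInstance, fun y => ?_⟩
  obtain ⟨S, hScard, hS⟩ := exists_finset_card_le_closure_eq_partialProdConjSup F hF y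
  refine ⟨⟨S, hS⟩, index_eq_zero_of_subgroupRank_lt hrg.le
    (partialProdConjSup_le (fun i => inf_le_left) y) ?_⟩
  have hrank : subgroupRank (partialProdConjSup (fun i => W ⊓ H i) y) * N ≤
      W.index * ∑ i, Group.rank (H i) := calc
    _ ≤ (∑ i, W.relIndex (H i) * Group.rank (H i)) * N := Nat.mul_le_mul_right _ <|
          ((subgroupRank_le_card hS).trans hScard).trans (Finset.sum_le_sum fun i _ => hFcard i)
    _ = ∑ i, W.relIndex (H i) * N * Group.rank (H i) := by
          rw [Finset.sum_mul]
          exact Finset.sum_congr rfl fun i _ => by ring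
    _ ≤ ∑ i, W.index * Group.rank (H i) := Finset.sum_le_sum fun i _ => Nat.mul_le_mul_right _ <|
          (Nat.mul_le_mul_left _ (hNU i)).trans (relIndex_mul_index_le (hWU i) (hHU i))
    _ = W.index * ∑ i, Group.rank (H i) := (Finset.mul_sum ..).symm
  have hN0 : (0 : ℝ) < N := pos_of_mul_pos_left ((by positivity : (0 : ℝ) ≤ _).trans_lt hN) hrg.le
  have hW : (0 : ℝ) < W.index := mod_cast Nat.pos_of_ne_zero Subgroup.FiniteIndex.index_ne_zero
  refine lt_of_mul_lt_mul_right ?_ hN0.le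
  calc (subgroupRank (partialProdConjSup (fun i => W ⊓ H i) y) : ℝ) * N
      ≤ W.index * ∑ i, (Group.rank (H i) : ℝ) := mod_cast hrank
    _ < W.index * (N * rankGradient G) := mul_lt_mul_of_pos_left hN hW
    _ = rankGradient G * W.index * N := by ring

lemma productSet_subset_iUnion_partialProdConjSup (W : Subgroup G) {n : ℕ}
    (H : Fin n → Subgroup G) :
    productSet H ⊆ ⋃ c : (i : Fin n) → H i ⧸ W.subgroupOf (H i),
      (partialProdConjSup (fun i => W ⊓ H i) (fun i => (c i).out) : Set G) *
        {(List.ofFn fun i => ((c i).out : G)).prod} := by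
  rintro _ ⟨f, hf, rfl⟩
  refine Set.mem_iUnion.mpr ⟨fun i => QuotientGroup.mk ⟨f i, hf i⟩, ?_⟩
  rw [Set.mul_singleton]
  refine ⟨_, prod_mul_inv_prod_mem_partialProdConjSup fun i => ?_, inv_mul_cancel_right _ _⟩
  have h := QuotientGroup.eq.mp (QuotientGroup.out_eq' (QuotientGroup.mk ⟨f i, hf i⟩ :
    H i ⧸ W.subgroupOf (H i)))
  exact ⟨Subgroup.mem_subgroupOf.mp h, (H i).mul_mem ((H i).inv_mem (Subtype.property _)) (hf i)⟩

end

theorem stmt_10_general {G : Type u} [Group G] (hlpf : IsLPF G)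
    (hrg : 0 < rankGradient G) (n : ℕ) (H : Fin n → Subgroup G)
    (hHfg : ∀ i, (H i).FG) (hHi : ∀ i, (H i).index = 0) :
    profiniteMeasure (productSet H) = 0 := by
  obtain ⟨W, _, _, hW⟩ :=
    exists_normal_forall_partialProdConjSup_fg_index_eq_zero hlpf hrg H hHfg hHi
  have := fun i => Subgroup.isFiniteRelIndex_of_finiteIndex (H := W) (K := H i)
  exact profiniteMeasure_eq_zero_of_subset_iUnion hlpf _ _ (fun _ => (hW _).1)
    (fun _ => (hW _).2) (productSet_subset_iUnion_partialProdConjSup W H)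

theorem stmt_10 {G : Type u} [Group G] (hfg : Group.FG G) (hlpf : IsLPF G)
    (hrg : 0 < rankGradient G) (n : ℕ) (H : Fin n → Subgroup G)
    (hHfg : ∀ i, (H i).FG) (hHi : ∀ i, (H i).index = 0) :
    profiniteMeasure (productSet H) = 0 :=
  stmt_10_general hlpf hrg n H hHfg hHi
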